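/- Let 𝒜 be an infinite independent family of subsets of ω. Then the following are equivalent: (2) for every h ∈ FF(𝒜) and every X ⊆ 𝒜^h, either there is B ∈ id(𝒜) such that 𝒜^h ∖ X ⊆ B, or there is h' ∈ FF(𝒜) extending h with 𝒜^{h'} ⊆ 𝒜^h ∖ X; (3) for every X ⊆ ω with X ∉ fil(𝒜) there is h ∈ FF(𝒜) such that X ⊆ ω ∖ 𝒜^h. -/

import Mathlib

/-- `FF 𝒜`: finite partial functions from `𝒜` to `{0,1}` (modelled as
`Set ℕ → Option Bool`) with finite non-empty domain contained in `𝒜`. -/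
def FF (𝒜 : Set (Set ℕ)) : Set (Set ℕ → Option Bool) :=
  {h | {A | h A ≠ none}.Finite ∧ {A | h A ≠ none}.Nonempty ∧ {A | h A ≠ none} ⊆ 𝒜}

/-- `h'` extends `h` as partial functions. -/
def PFunExtends (h h' : Set ℕ → Option Bool) : Prop :=
  ∀ (A : Set ℕ) (b : Bool), h A = some b → h' A = some b

/-- The boolean combination `𝒜^h`. -/
def comb (h : Set ℕ → Option Bool) : Set ℕ :=
  {n | ∀ A : Set ℕ, (h A = some true → n ∈ A) ∧ (h A = some false → n ∉ A)}

/-- `𝒜` is an independent family: all members are infinite, and for all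
disjoint finite non-empty subfamilies `B`, `C` of `𝒜`,
`(⋂ B) \ (⋃ C)` is infinite. -/
def IndepFamily (𝒜 : Set (Set ℕ)) : Prop :=
  (∀ A ∈ 𝒜, A.Infinite) ∧
  ∀ B C : Finset (Set ℕ), ↑B ⊆ 𝒜 → ↑C ⊆ 𝒜 → B.Nonempty → C.Nonempty →
    Disjoint B C →
      ((⋂ A ∈ (B : Set (Set ℕ)), A) \ (⋃ A ∈ (C : Set (Set ℕ)), A)).Infinite

/-- The density ideal `id(𝒜)`. -/
def densityIdeal (𝒜 : Set (Set ℕ)) : Set (Set ℕ) :=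
  {X | ∀ h ∈ FF 𝒜, ∃ h' ∈ FF 𝒜, PFunExtends h h' ∧ comb h' ∩ X = ∅}

/-- The density filter `fil(𝒜)`. -/
def densityFilter (𝒜 : Set (Set ℕ)) : Set (Set ℕ) :=
  {Y | ∀ h ∈ FF 𝒜, ∃ h' ∈ FF 𝒜, PFunExtends h h' ∧ comb h' ⊆ Y}

/-- `𝒜` is densely maximal. -/
def DenselyMaximal (𝒜 : Set (Set ℕ)) : Prop :=
  ∀ X : Set ℕ, X ∉ 𝒜 → ∀ h ∈ FF 𝒜, ∃ h' ∈ FF 𝒜, PFunExtends h h' ∧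
    ((comb h' ∩ X).Finite ∨ (comb h' \ X).Finite)

/-- `F` is a p-set. -/
def IsPSet (F : Set (Set ℕ)) : Prop :=
  ∀ F0 ⊆ F, F0.Countable → ∃ C ∈ F, ∀ X ∈ F0, (C \ X).Finite

/-- A partition of `ω` into finite sets. -/
def IsFinPartition (E : Set (Set ℕ)) : Prop :=
  (∀ e ∈ E, e.Finite) ∧ ⋃₀ E = Set.univ ∧ E.PairwiseDisjoint (id : Set ℕ → Set ℕ)

/-- `F` is a q-set: every partition of `ω` into finite sets has a
semi-selector in `F`. -/
def IsQSet (F : Set (Set ℕ)) : Prop :=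
  ∀ E : Set (Set ℕ), IsFinPartition E → ∃ C ∈ F, ∀ e ∈ E, (e ∩ C).Subsingleton

/-- A selective independent family. -/
def Selective (𝒜 : Set (Set ℕ)) : Prop :=
  IndepFamily 𝒜 ∧ DenselyMaximal 𝒜 ∧
    IsPSet (densityFilter 𝒜) ∧ IsQSet (densityFilter 𝒜)

/-- The boolean combination `ℬ^t` along an enumeration `B` of a countable
family, for a finite binary string `t`. -/
def strComb (B : ℕ → Set ℕ) (t : List Bool) : Set ℕ :=
  {m | ∀ i : Fin t.length, (t.get i = true → m ∈ B i) ∧ (t.get i = false → m ∉ B i)}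

/-- `K ⊆ 2^{<ω}` is dense: every string has an (end-)extension in `K`. -/
def DenseStrings (K : Set (List Bool)) : Prop :=
  ∀ s : List Bool, ∃ t ∈ K, s <+: t

/-
(2) ⇒ (3): if `X ∉ fil(𝒜)`, witnessed by `h₀`, split `𝒜^{h₀}` along `X`; the ideal alternative
would produce an extension of `h₀` whose combination lies inside `X`, so the other alternative
gives `h'` with `𝒜^{h'}` disjoint from `X`.
(3) ⇒ (2): put `Z = (ω ∖ 𝒜^h) ∪ X`. If `Z ∈ fil(𝒜)` then `𝒜^h ∖ X = ω ∖ Z ∈ id(𝒜)`. Otherwise (3)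
yields `h₁` with `𝒜^{h₁} ⊆ 𝒜^h ∖ X`. By independence `𝒜^{h₁} ≠ ∅`, which forces `h` and `h₁` to
agree on their common domain, so `h ∪ h₁` is the required extension of `h`.
-/

lemma mem_comb_iff {h : Set ℕ → Option Bool} {n : ℕ} :
    n ∈ comb h ↔ ∀ A b, h A = some b → (n ∈ A ↔ b = true) := by
  refine ⟨fun hn A b hb => ?_, fun hn A => ⟨fun ht => ?_, fun hf => ?_⟩⟩
  · cases b
    · simpa using (hn A).2 hb
    · simpa using (hn A).1 hb
  · simpa using hn A true ht
  · simpa using hn A false hf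

lemma comb_subset_comb_of_extends {h h' : Set ℕ → Option Bool} (he : PFunExtends h h') :
    comb h' ⊆ comb h := fun _ hn =>
  mem_comb_iff.2 fun A b hb => mem_comb_iff.1 hn A b (he A b hb)

lemma diff_subset_comb {h : Set ℕ → Option Bool} {B C : Set (Set ℕ)}
    (hB : ∀ A, h A = some true → A ∈ B) (hC : ∀ A, h A = some false → A ∈ C) :
    (⋂ A ∈ B, A) \ ⋃ A ∈ C, A ⊆ comb h := by
  rintro n ⟨hnB, hnC⟩ A
  simp only [Set.mem_iInter, Set.mem_iUnion, not_exists] at hnB hnC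
  exact ⟨fun ht => hnB A (hB A ht), fun hf => hnC A (hC A hf)⟩

/-- Fresh sets `A₀ ≠ A₁` outside the domain of `h` make both sides of the independence condition
non-empty even when `h` takes only one value. -/
lemma IndepFamily.comb_nonempty {𝒜 : Set (Set ℕ)} (hind : IndepFamily 𝒜) (hinf : 𝒜.Infinite)
    {h : Set ℕ → Option Bool} (hh : h ∈ FF 𝒜) : (comb h).Nonempty := by
  classical
  obtain ⟨hfin, -, hdom⟩ := hh
  set D := hfin.toFinset
  obtain ⟨A₀, hA₀, hA₀D⟩ := hinf.exists_notMem_finset D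
  obtain ⟨A₁, hA₁, hA₁D⟩ := hinf.exists_notMem_finset (insert A₀ D)
  have hD : ∀ A, A ∈ D ↔ h A ≠ none := fun A => hfin.mem_toFinset
  set B := insert A₀ (D.filter (h · = some true))
  set C := insert A₁ (D.filter (h · = some false))
  have hsub : ∀ A ∈ D, A ∈ 𝒜 := fun A hA => hdom ((hD A).1 hA)
  refine ((hind.2 B C ?_ ?_ (Finset.insert_nonempty _ _) (Finset.insert_nonempty _ _) ?_).mono
    (diff_subset_comb ?_ ?_)).nonempty
  · intro A hA
    simp only [B, Finset.coe_insert, Finset.coe_filter, Set.mem_insert_iff, Set.mem_ofPred_eq] at hA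
    exact hA.elim (· ▸ hA₀) fun hA => hsub A hA.1
  · intro A hA
    simp only [C, Finset.coe_insert, Finset.coe_filter, Set.mem_insert_iff, Set.mem_ofPred_eq] at hA
    exact hA.elim (· ▸ hA₁) fun hA => hsub A hA.1
  · rw [Finset.disjoint_left]
    intro A hAB hAC
    simp only [B, C, Finset.mem_insert, Finset.mem_filter] at hAB hAC hA₁D
    rcases hAB with rfl | ⟨hAD, hAt⟩ <;> rcases hAC with rfl | ⟨hAD', hAf⟩
    · exact hA₁D (.inl rfl)
    · exact hA₀D hAD'
    · exact hA₁D (.inr hAD)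
    · exact Bool.false_ne_true (Option.some.inj (hAf.symm.trans hAt))
  · intro A hA
    simp [B, hD, hA]
  · intro A hA
    simp [C, hD, hA]

section Union

variable {𝒜 : Set (Set ℕ)} {h h₁ : Set ℕ → Option Bool}

lemma union_mem_FF (hh : h ∈ FF 𝒜) (hh₁ : h₁ ∈ FF 𝒜) : (fun A => (h A).or (h₁ A)) ∈ FF 𝒜 := by
  have hdom : {A | (h A).or (h₁ A) ≠ none} = {A | h A ≠ none} ∪ {A | h₁ A ≠ none} := by
    ext A
    simp only [Set.mem_ofPred_eq, Set.mem_union, ne_eq, Option.or_eq_none_iff, not_and_or]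
  obtain ⟨hfin, hne, hsub⟩ := hh
  obtain ⟨hfin₁, -, hsub₁⟩ := hh₁
  rw [FF, Set.mem_ofPred_eq, hdom]
  exact ⟨hfin.union hfin₁, hne.mono Set.subset_union_left, Set.union_subset hsub hsub₁⟩

lemma extends_union_left : PFunExtends h fun A => (h A).or (h₁ A) := by
  intro A b hb
  simp [hb]

lemma extends_union_right (hcompat : ∀ A b b₁, h A = some b → h₁ A = some b₁ → b = b₁) :
    PFunExtends h₁ fun A => (h A).or (h₁ A) := by
  intro A b hb
  dsimp only
  cases hA : h A with
  | none => rw [Option.none_or, hb]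
  | some b' => rw [Option.some_or, hcompat A b' b hA hb]

/-- A common point of `𝒜^{h₁} ⊆ 𝒜^h` forces `h` and `h₁` to agree where both are defined. -/
lemma exists_extends_comb_subset (hh : h ∈ FF 𝒜) (hh₁ : h₁ ∈ FF 𝒜) (hne : (comb h₁).Nonempty)
    (hsub : comb h₁ ⊆ comb h) : ∃ h' ∈ FF 𝒜, PFunExtends h h' ∧ comb h' ⊆ comb h₁ := by
  obtain ⟨n, hn⟩ := hne
  have hcompat : ∀ A b b₁, h A = some b → h₁ A = some b₁ → b = b₁ := fun A b b₁ hb hb₁ =>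
    Bool.eq_iff_iff.2 <| (mem_comb_iff.1 (hsub hn) A b hb).symm.trans (mem_comb_iff.1 hn A b₁ hb₁)
  exact ⟨_, union_mem_FF hh hh₁, extends_union_left,
    comb_subset_comb_of_extends (extends_union_right hcompat)⟩

end Union

lemma compl_mem_densityIdeal {𝒜 : Set (Set ℕ)} {Y : Set ℕ} (hY : Y ∈ densityFilter 𝒜) :
    Yᶜ ∈ densityIdeal 𝒜 := fun h hh => by
  obtain ⟨h', hh', hext, hsub⟩ := hY h hh
  exact ⟨h', hh', hext,
    Set.disjoint_iff_inter_eq_empty.1 (Set.disjoint_compl_right_iff_subset.2 hsub)⟩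

theorem stmt_1 (𝒜 : Set (Set ℕ)) (hinf : 𝒜.Infinite) (hind : IndepFamily 𝒜) :
    (∀ h ∈ FF 𝒜, ∀ X ⊆ comb h,
        (∃ B ∈ densityIdeal 𝒜, comb h \ X ⊆ B) ∨
        (∃ h' ∈ FF 𝒜, PFunExtends h h' ∧ comb h' ⊆ comb h \ X)) ↔
    (∀ X : Set ℕ, X ∉ densityFilter 𝒜 → ∃ h ∈ FF 𝒜, X ⊆ (comb h)ᶜ) := by
  constructor
  · intro H X hX
    obtain ⟨h₀, hh₀, hnot⟩ : ∃ h₀ ∈ FF 𝒜, ∀ h' ∈ FF 𝒜, PFunExtends h₀ h' → ¬comb h' ⊆ X := by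
      simpa [densityFilter] using hX
    rcases H h₀ hh₀ (comb h₀ ∩ X) Set.inter_subset_left with ⟨B, hB, hsub⟩ | ⟨h', hh', -, hsub⟩
    · obtain ⟨h', hh', hext, hdisj⟩ := hB h₀ hh₀
      refine (hnot h' hh' hext fun n hn => by_contra fun hnX => ?_).elim
      have hnB : n ∈ B := hsub ⟨comb_subset_comb_of_extends hext hn, fun hn' => hnX hn'.2⟩
      exact Set.eq_empty_iff_forall_notMem.1 hdisj n ⟨hn, hnB⟩
    · exact ⟨h', hh', fun n hnX hn => (hsub hn).2 ⟨(hsub hn).1, hnX⟩⟩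
  · intro H h hh X _
    have hZ : ((comb h)ᶜ ∪ X)ᶜ = comb h \ X := by
      rw [Set.compl_union, compl_compl, Set.sdiff_eq]
    by_cases hfil : (comb h)ᶜ ∪ X ∈ densityFilter 𝒜
    · exact .inl ⟨_, compl_mem_densityIdeal hfil, hZ.ge⟩
    · obtain ⟨h₁, hh₁, hZ₁⟩ := H _ hfil
      have hsub : comb h₁ ⊆ comb h \ X := hZ ▸ Set.subset_compl_comm.1 hZ₁
      obtain ⟨h', hh', hext, hsub'⟩ := exists_extends_comb_subset hh hh₁
        (hind.comb_nonempty hinf hh₁) (hsub.trans Set.sdiff_subset)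
      exact .inr ⟨h', hh', hext, hsub'.trans hsub⟩
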